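/- arXiv:1802.09691 — 2 statements merged into one kernel-verified Lean document; each statement's English description precedes it below -/
import Mathlib

section
/- Define f_l(i) = 1 + min(d_x, d_y) + (d/2)·[(d/2) + (d mod 2) − 1], where d_x, d_y ∈ ℕ with d_x, d_y ≥ 1, d = d_x + d_y, and d/2 denotes integer division. Then f_l is a bijection from the set of unordered pairs {d_x, d_y} of positive integers onto the positive integers ≥ 2, together with f_l = 1 assigned when (d_x,d_y) corresponds to the target nodes. -/
/-- The Double-Radius Node Labeling (DRNL) perfect hashing function:
`f_l = 1 + min(d_x,d_y) + (d/2)·[(d/2) + (d % 2) − 1]` with `d = d_x + d_y`. -/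
def drnl (dx dy : ℕ) : ℕ :=
  1 + min dx dy + ((dx + dy) / 2) * ((dx + dy) / 2 + (dx + dy) % 2 - 1)

/-- auxiliary offset function -/
def drnlG (d : ℕ) : ℕ := (d / 2) * (d / 2 + d % 2 - 1)

lemma drnlG_succ (d : ℕ) : drnlG (d + 1) = drnlG d + d / 2 := by
  rcases Nat.even_or_odd d with ⟨k, hk⟩ | ⟨k, hk⟩
  · subst hk
    have h1 : (k + k) / 2 = k := by omega
    have h2 : (k + k) % 2 = 0 := by omega
    have h3 : (k + k + 1) / 2 = k := by omega
    have h4 : (k + k + 1) % 2 = 1 := by omega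
    simp only [drnlG, h1, h2, h3, h4]
    cases k with
    | zero => rfl
    | succ s =>
      have : s + 1 + 1 - 1 = s + 1 := by omega
      have : s + 1 + 0 - 1 = s := by omega
      simp only [Nat.add_sub_cancel, this]
      ring
  · subst hk
    have h1 : (2 * k + 1) / 2 = k := by omega
    have h2 : (2 * k + 1) % 2 = 1 := by omega
    have h3 : (2 * k + 1 + 1) / 2 = k + 1 := by omega
    have h4 : (2 * k + 1 + 1) % 2 = 0 := by omega
    simp only [drnlG, h1, h2, h3, h4, Nat.add_sub_cancel]
    have : k + 1 + 0 - 1 = k := by omega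
    rw [this]
    ring

lemma drnlG_mono {d d' : ℕ} (h : d < d') : drnlG d + d / 2 ≤ drnlG d' := by
  induction d' with
  | zero => omega
  | succ n ih =>
    rcases Nat.lt_succ_iff_lt_or_eq.mp h with h' | rfl
    · have h1 := ih h'
      have h2 := drnlG_succ n
      omega
    · rw [drnlG_succ]

lemma drnl_eq {a b : ℕ} (hab : a ≤ b) : drnl a b = 1 + a + drnlG (a + b) := by
  unfold drnl drnlG
  rw [min_eq_left hab]

lemma drnl_inj_ordered {a b a' b' : ℕ} (ha : 1 ≤ a) (hab : a ≤ b)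
    (ha' : 1 ≤ a') (hab' : a' ≤ b')
    (h : drnl a b = drnl a' b') : a = a' ∧ b = b' := by
  rw [drnl_eq hab, drnl_eq hab'] at h
  rcases lt_trichotomy (a + b) (a' + b') with hd | hd | hd
  · have := drnlG_mono hd
    omega
  · rw [hd] at h
    omega
  · have := drnlG_mono hd
    omega

lemma drnl_comm (x y : ℕ) : drnl x y = drnl y x := by
  unfold drnl
  rw [min_comm, Nat.add_comm x y]

/-- DRNL is a perfect hash: it is a bijection from unordered pairs of positive
integers onto the integers `≥ 2` (label `1` being reserved for the target nodes):
distinct unordered pairs receive distinct labels, every label is `≥ 2`, and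
every integer `≥ 2` is attained. -/
theorem drnl_bijective :
    (∀ dx dy dx' dy' : ℕ, 1 ≤ dx → 1 ≤ dy → 1 ≤ dx' → 1 ≤ dy' →
      (drnl dx dy = drnl dx' dy' ↔ (dx = dx' ∧ dy = dy') ∨ (dx = dy' ∧ dy = dx'))) ∧
    (∀ dx dy : ℕ, 1 ≤ dx → 1 ≤ dy → 2 ≤ drnl dx dy) ∧
    (∀ m : ℕ, 2 ≤ m → ∃ dx dy : ℕ, 1 ≤ dx ∧ 1 ≤ dy ∧ drnl dx dy = m) := by
  refine ⟨?_, ?_, ?_⟩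
  · intro dx dy dx' dy' h1 h2 h3 h4
    constructor
    · intro h
      rcases le_total dx dy with hxy | hxy <;> rcases le_total dx' dy' with hxy' | hxy'
      · have := drnl_inj_ordered h1 hxy h3 hxy' h
        tauto
      · rw [drnl_comm dx' dy'] at h
        have := drnl_inj_ordered h1 hxy h4 hxy' h
        tauto
      · rw [drnl_comm dx dy] at h
        have := drnl_inj_ordered h2 hxy h3 hxy' h
        tauto
      · rw [drnl_comm dx dy, drnl_comm dx' dy'] at h
        have := drnl_inj_ordered h2 hxy h4 hxy' h
        tauto
    · rintro (⟨rfl, rfl⟩ | ⟨rfl, rfl⟩)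
      · rfl
      · exact drnl_comm dx dy
  · intro dx dy h1 h2
    unfold drnl
    omega
  · intro m hm
    have key : ∀ m, 2 ≤ m → ∃ a b : ℕ, 1 ≤ a ∧ a ≤ b ∧ drnl a b = m := by
      intro m hm
      induction m, hm using Nat.le_induction with
      | base => exact ⟨1, 1, le_refl _, le_refl _, by decide⟩
      | succ n hn ih =>
        obtain ⟨a, b, ha, hab, hd⟩ := ih
        rw [drnl_eq hab] at hd
        by_cases hb : a + 2 ≤ b
        · refine ⟨a + 1, b - 1, by omega, by omega, ?_⟩
          rw [drnl_eq (by omega : a + 1 ≤ b - 1)]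
          have he : a + 1 + (b - 1) = a + b := by omega
          rw [he]
          omega
        · refine ⟨1, a + b, by omega, by omega, ?_⟩
          rw [drnl_eq (by omega : 1 ≤ a + b)]
          have he : 1 + (a + b) = a + b + 1 := by omega
          rw [he, drnlG_succ]
          have : (a + b) / 2 = a := by omega
          omega
    obtain ⟨a, b, ha, hab, hd⟩ := key m hm
    exact ⟨a, b, ha, by omega, hd⟩
end

section
/- For the DRNL hash f_l(i) = 1 + min(d_x,d_y) + (d/2)·[(d/2) + (d mod 2) − 1] with d = d_x + d_y (integer division), if d(i,x)+d(i,y) < d(j,x)+d(j,y) then f_l(i) < f_l(j); and if d(i,x)+d(i,y) = d(j,x)+d(j,y), then f_l(i) < f_l(j) if and only if d(i,x)·d(i,y) < d(j,x)·d(j,y). -/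
private lemma g_eq (d : ℕ) : (d / 2) * (d / 2 + d % 2 - 1) = (d / 2) * ((d - 1) / 2) := by
  rcases Nat.eq_zero_or_pos d with h | h
  · subst h; rfl
  · congr 1; omega

private lemma g_mono {d d' : ℕ} (h : d ≤ d') :
    (d / 2) * ((d - 1) / 2) ≤ (d' / 2) * ((d' - 1) / 2) :=
  Nat.mul_le_mul (by omega) (by omega)

private lemma g_step {d : ℕ} (hd : 1 ≤ d) :
    d / 2 + (d / 2) * ((d - 1) / 2) < 1 + ((d + 1) / 2) * (d / 2) := by
  have h1 : (d + 1) / 2 = (d - 1) / 2 + 1 := by omega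
  rw [h1]
  nlinarith [Nat.zero_le ((d / 2) * ((d - 1) / 2))]

private lemma prod_mono {m m' a a' : ℕ} (h1 : m + a = m' + a')
    (hm : m ≤ m') (h : m' ≤ a') : m * a ≤ m' * a' := by
  nlinarith

private lemma prod_strict {m m' a a' : ℕ} (h1 : m + a = m' + a')
    (hm : m < m') (h : m' ≤ a') : m * a < m' * a' := by
  nlinarith

/-- DRNL labels are monotone first in the sum of the two distances, and on
ties of the sum, monotone in the product of the two distances. -/
theorem drnl_monotone (dx dy dx' dy' : ℕ)
    (hdx : 1 ≤ dx) (hdy : 1 ≤ dy) (hdx' : 1 ≤ dx') (hdy' : 1 ≤ dy') :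
    (dx + dy < dx' + dy' → drnl dx dy < drnl dx' dy') ∧
    (dx + dy = dx' + dy' → (drnl dx dy < drnl dx' dy' ↔ dx * dy < dx' * dy')) := by
  unfold drnl
  rw [g_eq, g_eq]
  set d := dx + dy with hd
  set d' := dx' + dy' with hd'
  constructor
  · intro hlt
    have h1 : min dx dy ≤ d / 2 := by omega
    have h2 : 1 ≤ min dx' dy' := by omega
    have h3 : ((d + 1) / 2) * ((d + 1 - 1) / 2) ≤ (d' / 2) * ((d' - 1) / 2) :=
      g_mono (by omega)
    have h4 := g_step (d := d) (by omega)
    simp only [Nat.add_sub_cancel] at h3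
    omega
  · intro heq
    have hiff1 : (1 + min dx dy + (d / 2) * ((d - 1) / 2) <
        1 + min dx' dy' + (d' / 2) * ((d' - 1) / 2)) ↔ min dx dy < min dx' dy' := by
      rw [← heq] at *
      omega
    rw [hiff1]
    have e1 : dx * dy = min dx dy * max dx dy := by
      rcases le_total dx dy with h | h
      · rw [min_eq_left h, max_eq_right h]
      · rw [min_eq_right h, max_eq_left h, Nat.mul_comm]
    have e1' : dx' * dy' = min dx' dy' * max dx' dy' := by
      rcases le_total dx' dy' with h | h
      · rw [min_eq_left h, max_eq_right h]
      · rw [min_eq_right h, max_eq_left h, Nat.mul_comm]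
    rw [e1, e1']
    have s1 : min dx dy + max dx dy = min dx' dy' + max dx' dy' := by omega
    have m1 : min dx dy ≤ max dx dy := le_trans (min_le_left _ _) (le_max_left _ _)
    have m2 : min dx' dy' ≤ max dx' dy' := le_trans (min_le_left _ _) (le_max_left _ _)
    constructor
    · intro h
      exact prod_strict s1 h m2
    · intro h
      by_contra hc
      push_neg at hc
      exact absurd (prod_mono s1.symm hc m1) (by omega)
end
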